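/- arXiv:1610.01804 — 3 statements merged into one kernel-verified Lean document; each statement's English description precedes it below -/
import Mathlib

section
/- Let v be a piecewise polynomial in time on a partition {I_n} with values in a Hilbert space, left-continuous, with jumps ⟦v⟧_{n−1} := v(t_{n−1}) − v(t_{n−1}^+). Define the Radau reconstruction I v on I_n by (I v)|_{I_n} := v|_{I_n} + ((−1)^{q_n}/2)(L_{q_n}^n − L_{q_n+1}^n)⟦v⟧_{n−1}. Then (I v)|_{I_n}(t_n) = v(t_n) and (I v)|_{I_n}(t_{n−1}^+) = v(t_{n−1}), so I v is continuous in time at each partition point t_1, …, t_{N−1}. -/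
open MeasureTheory Polynomial

/-- The Legendre polynomial of degree `q` (Rodrigues' formula). -/
noncomputable def legendreP (q : ℕ) : Polynomial ℝ :=
  ((1 : ℝ) / (2 ^ q * q.factorial)) • (fun p : Polynomial ℝ => derivative p)^[q] ((X ^ 2 - 1) ^ q)

/-- The Legendre polynomial of degree `q` mapped affinely from `(-1,1)` to `(a,b)`,
evaluated at `t`. -/
noncomputable def legMap (q : ℕ) (a b t : ℝ) : ℝ :=
  (legendreP q).eval (2 * (t - a) / (b - a) - 1)

namespace Polynomial

theorem eval_iterate_derivative_X_sub_C_pow_mul {R : Type*} [CommRing R] (n : ℕ) (c : R)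
    (p : R[X]) : (derivative^[n] ((X - C c) ^ n * p)).eval c = n.factorial * p.eval c := by
  rw [iterate_derivative_mul, eval_finsetSum,
    Finset.sum_eq_single_of_mem 0 (Finset.mem_range.mpr n.succ_pos)]
  · rw [n.choose_zero_right, one_smul, eval_mul, n.sub_zero, iterate_derivative_X_sub_pow_self,
      eval_natCast, Function.iterate_zero_apply]
  · intro k hk hk0
    rw [iterate_derivative_X_sub_pow, eval_smul, eval_mul, eval_smul, eval_pow,
      Nat.sub_sub_self (Finset.mem_range_succ_iff.mp hk), eval_sub, eval_X, eval_C, sub_self,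
      zero_pow hk0, smul_zero, zero_mul, smul_zero]

end Polynomial

-- Rodrigues' formula: write `(X² - 1)^q = (X ∓ 1)^q (X ± 1)^q`; only the term of the Leibniz
-- expansion that differentiates `(X ∓ 1)^q` exactly `q` times survives at `±1`.
theorem legendreP_eval_one (q : ℕ) : (legendreP q).eval 1 = 1 := by
  have hfactor : ((X : ℝ[X]) ^ 2 - 1) ^ q = (X - C 1) ^ q * (X + 1) ^ q := by
    rw [← mul_pow, C_1]; ring
  rw [legendreP, eval_smul, hfactor, eval_iterate_derivative_X_sub_C_pow_mul]
  simp only [eval_pow, eval_add, eval_X, eval_one, smul_eq_mul]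
  field_simp
  norm_num

theorem legendreP_eval_neg_one (q : ℕ) : (legendreP q).eval (-1) = (-1) ^ q := by
  have hfactor : ((X : ℝ[X]) ^ 2 - 1) ^ q = (X - C (-1)) ^ q * (X - 1) ^ q := by
    rw [← mul_pow, C_neg, C_1]; ring
  rw [legendreP, eval_smul, hfactor, eval_iterate_derivative_X_sub_C_pow_mul]
  simp only [eval_pow, eval_sub, eval_X, eval_one, smul_eq_mul]
  rw [show (-1 - 1 : ℝ) = -1 * 2 by norm_num, mul_pow]
  field_simp

theorem legMap_right {a b : ℝ} (hab : a ≠ b) (q : ℕ) : legMap q a b b = 1 := by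
  rw [legMap, mul_div_assoc, div_self (sub_ne_zero.mpr hab.symm), mul_one]
  norm_num [legendreP_eval_one]

theorem legMap_left (a b : ℝ) (q : ℕ) : legMap q a b a = (-1) ^ q := by
  rw [legMap, sub_self, mul_zero, zero_div, zero_sub, legendreP_eval_neg_one]

/-- Radau reconstruction endpoint values. On the interval `I_n = (a,b)`, with `vn`
the restriction of `v` to `I_n` (a `V`-valued polynomial of degree `q`), `vprev`
the left-continuous value `v(t_{n-1})` from the previous interval (so the jump is
`⟦v⟧_{n-1} = vprev − vn(a)`), the Radau reconstruction
`(I v)(t) = vn(t) + ((−1)^q/2)(L_q(t) − L_{q+1}(t)) • ⟦v⟧_{n-1}`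
satisfies `(I v)(t_n) = v(t_n)` and `(I v)(t_{n-1}⁺) = v(t_{n-1})`; hence `I v` is
continuous in time at each interior partition point. -/
theorem stmt_6 {V : Type*} [NormedAddCommGroup V] [Module ℝ V]
    (q : ℕ) (a b : ℝ) (hab : a < b) (vn : ℝ → V) (vprev : V) :
    (vn b + (((-1 : ℝ) ^ q / 2) * (legMap q a b b - legMap (q + 1) a b b)) • (vprev - vn a)
        = vn b) ∧
    (vn a + (((-1 : ℝ) ^ q / 2) * (legMap q a b a - legMap (q + 1) a b a)) • (vprev - vn a)
        = vprev) := by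
  have hcoeff : ((-1 : ℝ) ^ q / 2) * ((-1) ^ q - (-1) ^ (q + 1)) = 1 := by
    rcases neg_one_pow_eq_or ℝ q with h | h <;> rw [pow_succ, h] <;> norm_num
  refine ⟨?_, ?_⟩
  · rw [legMap_right hab.ne, legMap_right hab.ne, sub_self, mul_zero, zero_smul, add_zero]
  · rw [legMap_left, legMap_left, hcoeff, one_smul, add_sub_cancel]
end

section
/- Under the assumption that there exists θ ∈ [0,1) such that the coarsening error satisfies ‖∇(j_n − P_h^n j_n)‖² ≤ θ‖∇j_n‖² for the jump j_n := ⟦u_{hτ}⟧_{n−1} at each time-step n, and given the per-step relations (τ_n/(8q_n+4))‖∇j_n‖² ≤ R_n² + (τ_n/(8q_n+4))‖∇(j_n − P_h^n j_n)‖², ∑_n R_n² ≤ E², and J_n² := (τ_n(q_n+1))/((2q_n+1)(2q_n+3))‖∇j_n‖², the composite error M² := E² + ∑_n J_n² satisfies E² ≤ M² ≤ ((3−θ)/(1−θ)) E². -/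
/-- Corollary 6.2 (abstract form): with `a_n = ‖∇⟦u_{hτ}⟧_{n-1}‖`,
`c_n = ‖∇(j_n − P_h^n j_n)‖` the coarsening error, `R_n` the time-localized dual
residual norms, and `E = ‖u − I u_{hτ}‖_Y`, assume `c_n² ≤ θ a_n²` with
`θ ∈ [0,1)`, the per-step relation `(τ_n/(8q_n+4)) a_n² ≤ R_n² + (τ_n/(8q_n+4)) c_n²`,
and `∑ R_n² ≤ E²`. Then with `J_n² = τ_n(q_n+1)/((2q_n+1)(2q_n+3)) a_n²`, the
composite error `M² = E² + ∑ J_n²` satisfies `E² ≤ M² ≤ ((3−θ)/(1−θ)) E²`. -/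
theorem stmt_12 (N : ℕ) (θ : ℝ) (hθ0 : 0 ≤ θ) (hθ1 : θ < 1)
    (τ : ℕ → ℝ) (hτ : ∀ n ∈ Finset.range N, 0 < τ n) (q : ℕ → ℕ)
    (a c R : ℕ → ℝ) (E : ℝ) (hE : 0 ≤ E)
    (ha : ∀ n ∈ Finset.range N, 0 ≤ a n)
    (hc : ∀ n ∈ Finset.range N, 0 ≤ c n)
    (hcoarse : ∀ n ∈ Finset.range N, (c n) ^ 2 ≤ θ * (a n) ^ 2)
    (hstep : ∀ n ∈ Finset.range N,
      (τ n / (8 * (q n : ℝ) + 4)) * (a n) ^ 2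
        ≤ (R n) ^ 2 + (τ n / (8 * (q n : ℝ) + 4)) * (c n) ^ 2)
    (hsum : ∑ n ∈ Finset.range N, (R n) ^ 2 ≤ E ^ 2) :
    E ^ 2 ≤ E ^ 2 + ∑ n ∈ Finset.range N,
        (τ n * ((q n : ℝ) + 1) / ((2 * (q n : ℝ) + 1) * (2 * (q n : ℝ) + 3))) * (a n) ^ 2 ∧
    E ^ 2 + ∑ n ∈ Finset.range N,
        (τ n * ((q n : ℝ) + 1) / ((2 * (q n : ℝ) + 1) * (2 * (q n : ℝ) + 3))) * (a n) ^ 2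
      ≤ ((3 - θ) / (1 - θ)) * E ^ 2 := by
  have h1θ : (0:ℝ) < 1 - θ := by linarith
  have key : ∀ n ∈ Finset.range N,
      (τ n * ((q n : ℝ) + 1) / ((2 * (q n : ℝ) + 1) * (2 * (q n : ℝ) + 3))) * (a n) ^ 2
        ≤ (2 / (1 - θ)) * (R n) ^ 2 := by
    intro n hn
    have hQ : (0:ℝ) ≤ (q n : ℝ) := Nat.cast_nonneg _
    have hτn := hτ n hn
    have hk : (0:ℝ) < τ n / (8 * (q n : ℝ) + 4) := by positivity
    have hRn : (τ n / (8 * (q n : ℝ) + 4)) * (1 - θ) * (a n) ^ 2 ≤ (R n) ^ 2 := by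
      have h1 := hstep n hn
      have h2 := hcoarse n hn
      nlinarith [mul_le_mul_of_nonneg_left h2 hk.le]
    have hco : τ n * ((q n : ℝ) + 1) / ((2 * (q n : ℝ) + 1) * (2 * (q n : ℝ) + 3))
        ≤ 2 * (τ n / (8 * (q n : ℝ) + 4)) := by
      have : 2 * (τ n / (8 * (q n : ℝ) + 4)) = 2 * τ n / (8 * (q n : ℝ) + 4) := by
        ring
      rw [this, div_le_div_iff₀ (by positivity) (by positivity)]
      nlinarith
    have ha2 : (0:ℝ) ≤ (a n) ^ 2 := sq_nonneg _
    calc (τ n * ((q n : ℝ) + 1) / ((2 * (q n : ℝ) + 1) * (2 * (q n : ℝ) + 3))) * (a n) ^ 2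
        ≤ 2 * (τ n / (8 * (q n : ℝ) + 4)) * (a n) ^ 2 :=
          mul_le_mul_of_nonneg_right hco ha2
      _ ≤ (2 / (1 - θ)) * (R n) ^ 2 := by
          rw [div_mul_eq_mul_div, le_div_iff₀ h1θ]
          nlinarith
  have hsum2 : ∑ n ∈ Finset.range N,
      (τ n * ((q n : ℝ) + 1) / ((2 * (q n : ℝ) + 1) * (2 * (q n : ℝ) + 3))) * (a n) ^ 2
      ≤ (2 / (1 - θ)) * E ^ 2 := by
    calc _ ≤ ∑ n ∈ Finset.range N, (2 / (1 - θ)) * (R n) ^ 2 := Finset.sum_le_sum key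
      _ = (2 / (1 - θ)) * ∑ n ∈ Finset.range N, (R n) ^ 2 := by rw [Finset.mul_sum]
      _ ≤ (2 / (1 - θ)) * E ^ 2 := by
          apply mul_le_mul_of_nonneg_left hsum (by positivity)
  constructor
  · have : (0:ℝ) ≤ ∑ n ∈ Finset.range N,
        (τ n * ((q n : ℝ) + 1) / ((2 * (q n : ℝ) + 1) * (2 * (q n : ℝ) + 3))) * (a n) ^ 2 := by
      apply Finset.sum_nonneg
      intro n hn
      have := (hτ n hn).le
      have hQ : (0:ℝ) ≤ (q n : ℝ) := Nat.cast_nonneg _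
      positivity
    linarith
  · have : (3 - θ) / (1 - θ) * E ^ 2 = E ^ 2 + (2 / (1 - θ)) * E ^ 2 := by
      field_simp; ring
    linarith
end

section
/- Let V be a Hilbert space with inner product a(·,·) and induced norm, V' its dual. For functionals R_0,…,R_q ∈ V', let z_j ∈ V solve a(z_j, v) = ⟨R_j, v⟩ for all v ∈ V. Then with z_* := ∑_j z_j φ_j for an L²(I)-orthonormal family {φ_j}, and R(v) := ∑_j ∫_I ⟨R_j, v(t)⟩ φ_j(t) dt for v ∈ L²(I;V): (∑_{j=0}^q ‖R_j‖²_{V'})^{1/2} ≤ sup_{v ∈ P_q(I;V), v≠0} R(v) / (∫_I a(v(t),v(t)) dt)^{1/2}, where P_q(I;V) is the space of V-valued polynomials of degree ≤ q on I. -/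
/-!
Take `v = z_* = ∑ⱼ φⱼ • zⱼ`, a `V`-valued polynomial of degree `≤ q`. By orthonormality its
`j`-th Fourier coefficient is `zⱼ`, so `R(z_*) = ∑ⱼ ⟪zⱼ, zⱼ⟫ = ∑ⱼ ‖Rⱼ‖²` and, by Parseval,
`∫ ‖z_*‖² = ∑ⱼ ‖Rⱼ‖²`; the quotient at `z_*` is therefore `(∑ⱼ ‖Rⱼ‖²)^{1/2}`. The supremum is a
genuine one because Cauchy–Schwarz in `L²(a, b)` bounds every quotient by `∑ⱼ ‖Rⱼ‖`.
-/

open MeasureTheory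

theorem intervalIntegral.integral_mul_le_sqrt_mul_sqrt {a b : ℝ} (hab : a ≤ b) {f g : ℝ → ℝ}
    (hf : Continuous f) (hg : Continuous g) :
    ∫ t in a..b, f t * g t ≤ √(∫ t in a..b, f t ^ 2) * √(∫ t in a..b, g t ^ 2) := by
  set A := ∫ t in a..b, f t ^ 2
  set B := ∫ t in a..b, g t ^ 2
  set C := ∫ t in a..b, f t * g t
  have hquad : ∀ s : ℝ, 0 ≤ A * (s * s) + (-2 * C) * s + B := by
    intro s
    have hexpand : ∫ t in a..b, (s * f t - g t) ^ 2 = A * (s * s) + (-2 * C) * s + B := by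
      have hpt : ∀ t, (s * f t - g t) ^ 2 = (s * s) * f t ^ 2 - 2 * s * (f t * g t) + g t ^ 2 :=
        fun t => by ring
      simp only [hpt]
      rw [intervalIntegral.integral_add, intervalIntegral.integral_sub,
        intervalIntegral.integral_const_mul, intervalIntegral.integral_const_mul]
      · ring
      all_goals exact (by fun_prop : Continuous _).intervalIntegrable a b
    rw [← hexpand]
    exact intervalIntegral.integral_nonneg hab fun t _ => sq_nonneg _
  have hC : C ^ 2 ≤ A * B := by
    have := discrim_le_zero hquad
    rw [discrim] at this
    linarith
  calc C ≤ |C| := le_abs_self C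
    _ ≤ √(A * B) := Real.abs_le_sqrt hC
    _ = √A * √B := Real.sqrt_mul (intervalIntegral.integral_nonneg hab fun t _ => sq_nonneg _) B

section

variable {V : Type*} [NormedAddCommGroup V] [InnerProductSpace ℝ V]

theorem norm_eq_norm_of_forall_inner_eq {R : StrongDual ℝ V} {z : V}
    (hz : ∀ v, inner ℝ z v = R v) : ‖R‖ = ‖z‖ := by
  have hR : R = innerSL ℝ z := ContinuousLinearMap.ext fun v => (hz v).symm
  rw [hR, innerSL_apply_norm]

theorem integral_apply_mul_le {a b : ℝ} (hab : a ≤ b) (R : StrongDual ℝ V) {v : ℝ → V}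
    (hv : Continuous v) {φ : ℝ → ℝ} (hφ : Continuous φ) :
    ∫ t in a..b, R (v t) * φ t ≤
      ‖R‖ * (√(∫ t in a..b, ‖v t‖ ^ 2) * √(∫ t in a..b, φ t ^ 2)) := by
  have hpt : ∀ t, R (v t) * φ t ≤ ‖R‖ * (‖v t‖ * |φ t|) := fun t =>
    calc R (v t) * φ t ≤ |R (v t)| * |φ t| := (le_abs_self _).trans_eq (abs_mul _ _)
      _ ≤ ‖R‖ * ‖v t‖ * |φ t| := by gcongr; exact R.le_opNorm (v t)
      _ = ‖R‖ * (‖v t‖ * |φ t|) := mul_assoc _ _ _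
  calc ∫ t in a..b, R (v t) * φ t ≤ ∫ t in a..b, ‖R‖ * (‖v t‖ * |φ t|) :=
        intervalIntegral.integral_mono_on hab (Continuous.intervalIntegrable (by fun_prop) _ _)
          (Continuous.intervalIntegrable (by fun_prop) _ _) fun t _ => hpt t
    _ = ‖R‖ * ∫ t in a..b, ‖v t‖ * |φ t| := intervalIntegral.integral_const_mul _ _
    _ ≤ ‖R‖ * (√(∫ t in a..b, ‖v t‖ ^ 2) * √(∫ t in a..b, φ t ^ 2)) := by
        gcongr
        simpa only [sq_abs] using
          intervalIntegral.integral_mul_le_sqrt_mul_sqrt hab hv.norm hφ.abs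

theorem Polynomial.eval_smul_eq_sum_pow_smul {p : Polynomial ℝ} {n : ℕ} (hp : p.natDegree < n)
    (t : ℝ) (x : V) : p.eval t • x = ∑ i : Fin n, t ^ (i : ℕ) • (p.coeff i • x) := by
  rw [p.eval_eq_sum_range' hp, ← Fin.sum_univ_eq_sum_range (fun i => p.coeff i * t ^ i),
    Finset.sum_smul]
  exact Finset.sum_congr rfl fun i _ => by rw [smul_smul, mul_comm]

variable {ι : Type*} [Fintype ι]

theorem integral_inner_sum_smul_mul [DecidableEq ι] {a b : ℝ} {φ : ι → ℝ → ℝ}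
    (hφ : ∀ j, Continuous (φ j))
    (horth : ∀ i j, ∫ t in a..b, φ i t * φ j t = if i = j then 1 else 0)
    (x : V) (y : ι → V) (j : ι) :
    ∫ t in a..b, inner ℝ x (∑ k, φ k t • y k) * φ j t = inner ℝ x (y j) := by
  have hpt : ∀ t, inner ℝ x (∑ k, φ k t • y k) * φ j t =
      ∑ k, (φ k t * φ j t) * inner ℝ x (y k) := fun t => by
    simp only [inner_sum, real_inner_smul_right, Finset.sum_mul]
    exact Finset.sum_congr rfl fun k _ => by ring
  simp only [hpt]
  rw [intervalIntegral.integral_finsetSum fun k _ =>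
    Continuous.intervalIntegrable (by fun_prop) _ _]
  simp only [intervalIntegral.integral_mul_const, horth, ite_mul, one_mul, zero_mul,
    Finset.sum_ite_eq', Finset.mem_univ, if_true]

theorem integral_norm_sum_smul_sq [DecidableEq ι] {a b : ℝ} {φ : ι → ℝ → ℝ}
    (hφ : ∀ j, Continuous (φ j))
    (horth : ∀ i j, ∫ t in a..b, φ i t * φ j t = if i = j then 1 else 0) (y : ι → V) :
    ∫ t in a..b, ‖∑ j, φ j t • y j‖ ^ 2 = ∑ j, ‖y j‖ ^ 2 := by
  have hpt : ∀ t, ‖∑ j, φ j t • y j‖ ^ 2 = ∑ j, inner ℝ (y j) (∑ k, φ k t • y k) * φ j t :=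
    fun t => by
      rw [← real_inner_self_eq_norm_sq, sum_inner]
      exact Finset.sum_congr rfl fun j _ => by rw [real_inner_smul_left, real_inner_comm, mul_comm]
  simp only [hpt]
  rw [intervalIntegral.integral_finsetSum fun j _ =>
    Continuous.intervalIntegrable (by fun_prop) _ _]
  simp only [integral_inner_sum_smul_mul hφ horth, real_inner_self_eq_norm_sq]

theorem exists_sum_smul_eq_sum_pow_smul {q : ℕ} {φ : ι → ℝ → ℝ}
    (hφ : ∀ j, ∃ p : Polynomial ℝ, p.natDegree ≤ q ∧ ∀ t, φ j t = p.eval t) (y : ι → V) :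
    ∃ c : Fin (q + 1) → V, ∀ t, ∑ j, φ j t • y j = ∑ i : Fin (q + 1), t ^ (i : ℕ) • c i := by
  choose p hp using hφ
  refine ⟨fun i => ∑ j, (p j).coeff i • y j, fun t => ?_⟩
  simp only [(hp _).2, Polynomial.eval_smul_eq_sum_pow_smul (Nat.lt_succ_of_le (hp _).1),
    Finset.smul_sum]
  exact Finset.sum_comm

/-- The quotients `R(v) / ‖v‖_{L²(a,b;V)}` over `V`-valued polynomials `v` of degree `< n`
that are nonzero in `L²(a,b;V)`. -/
def residualQuotients (n : ℕ) (a b : ℝ) (φ : ι → ℝ → ℝ) (R : ι → StrongDual ℝ V) : Set ℝ :=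
  {r : ℝ | ∃ v : ℝ → V,
    (∃ c : Fin n → V, ∀ t : ℝ, v t = ∑ i : Fin n, t ^ (i : ℕ) • c i) ∧
    (∫ t in a..b, ‖v t‖ ^ 2) ≠ 0 ∧
    r = (∑ j, ∫ t in a..b, (R j (v t)) * φ j t) / Real.sqrt (∫ t in a..b, ‖v t‖ ^ 2)}

theorem bddAbove_residualQuotients {n : ℕ} {a b : ℝ} (hab : a ≤ b) {φ : ι → ℝ → ℝ}
    (hφ : ∀ j, Continuous (φ j)) (hnorm : ∀ j, ∫ t in a..b, φ j t ^ 2 = 1)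
    (R : ι → StrongDual ℝ V) : BddAbove (residualQuotients n a b φ R) := by
  refine ⟨∑ j, ‖R j‖, ?_⟩
  rintro r ⟨v, ⟨c, hc⟩, hD, rfl⟩
  have hv : Continuous v := by rw [funext hc]; fun_prop
  have hDpos : 0 < √(∫ t in a..b, ‖v t‖ ^ 2) := Real.sqrt_pos.2 <|
    (intervalIntegral.integral_nonneg hab fun t _ => sq_nonneg _).lt_of_ne hD.symm
  rw [div_le_iff₀ hDpos, Finset.sum_mul]
  refine Finset.sum_le_sum fun j _ => ?_
  simpa only [hnorm, Real.sqrt_one, mul_one] using integral_apply_mul_le hab (R j) hv (hφ j)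

end

theorem stmt_17_general {V : Type*} [NormedAddCommGroup V] [InnerProductSpace ℝ V]
    (q : ℕ) (a b : ℝ) (hab : a < b)
    (φ : Fin (q + 1) → ℝ → ℝ)
    (hφpoly : ∀ j, ∃ p : Polynomial ℝ, p.natDegree ≤ q ∧ ∀ t : ℝ, φ j t = p.eval t)
    (horth : ∀ i j, (∫ t in a..b, φ i t * φ j t) = if i = j then 1 else 0)
    (R : Fin (q + 1) → StrongDual ℝ V)
    (z : Fin (q + 1) → V) (hz : ∀ j, ∀ v : V, (inner ℝ (z j) v : ℝ) = R j v) :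
    Real.sqrt (∑ j, ‖R j‖ ^ 2) ≤
      sSup {r : ℝ | ∃ v : ℝ → V,
        (∃ c : Fin (q + 1) → V, ∀ t : ℝ, v t = ∑ i : Fin (q + 1), t ^ (i : ℕ) • c i) ∧
        (∫ t in a..b, ‖v t‖ ^ 2) ≠ 0 ∧
        r = (∑ j, ∫ t in a..b, (R j (v t)) * φ j t) /
              Real.sqrt (∫ t in a..b, ‖v t‖ ^ 2)} := by
  change _ ≤ sSup (residualQuotients (q + 1) a b φ R)
  rcases eq_or_ne (∑ j, ‖R j‖ ^ 2) 0 with hS | hS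
  · have hR : ∀ j, R j = 0 := fun j => norm_eq_zero.1 <| (pow_eq_zero_iff two_ne_zero).1 <|
      (Finset.sum_eq_zero_iff_of_nonneg fun j _ => sq_nonneg _).1 hS j (Finset.mem_univ j)
    rw [hS, Real.sqrt_zero]
    -- every quotient vanishes, and `sSup ∅ = 0` covers a trivial `V`
    exact Real.sSup_nonneg fun r ⟨v, _, _, hr⟩ => by simp [hr, hR]
  have hφc : ∀ j, Continuous (φ j) := fun j => by
    obtain ⟨p, -, hp⟩ := hφpoly j
    rw [funext hp]
    exact p.continuous
  simp only [fun j => norm_eq_norm_of_forall_inner_eq (hz j)] at hS ⊢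
  obtain ⟨c, hc⟩ := exists_sum_smul_eq_sum_pow_smul hφpoly z
  have hparseval := integral_norm_sum_smul_sq hφc horth z
  have hnum : ∑ j, ∫ t in a..b, R j (∑ k, φ k t • z k) * φ j t = ∑ j, ‖z j‖ ^ 2 := by
    simp only [← hz, integral_inner_sum_smul_mul hφc horth, real_inner_self_eq_norm_sq]
  refine le_csSup (bddAbove_residualQuotients hab.le hφc (fun j => by simpa [sq] using horth j j) R)
    ⟨fun t => ∑ j, φ j t • z j, ⟨c, hc⟩, hparseval ▸ hS, ?_⟩
  rw [hnum, hparseval, Real.div_sqrt]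

/-- Inequality (8.6), abstracted: let `V` be a Hilbert space (inner product `a(·,·)`),
`R_0,…,R_q ∈ V'`, and `z_j ∈ V` their Riesz representatives (`a(z_j,v) = ⟨R_j,v⟩`).
Let `{φ_j}` be an `L²(I)`-orthonormal family of polynomials of degree ≤ q and set
`R(v) = ∑_j ∫_I ⟨R_j, v(t)⟩ φ_j(t) dt`. Then
`(∑_j ‖R_j‖²_{V'})^{1/2} ≤ sup_{v ∈ P_q(I;V)\{0}} R(v)/(∫_I a(v,v) dt)^{1/2}`. -/
theorem stmt_17 {V : Type*} [NormedAddCommGroup V] [InnerProductSpace ℝ V] [CompleteSpace V]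
    (q : ℕ) (a b : ℝ) (hab : a < b)
    (φ : Fin (q + 1) → ℝ → ℝ)
    (hφpoly : ∀ j, ∃ p : Polynomial ℝ, p.natDegree ≤ q ∧ ∀ t : ℝ, φ j t = p.eval t)
    (horth : ∀ i j, (∫ t in a..b, φ i t * φ j t) = if i = j then 1 else 0)
    (R : Fin (q + 1) → StrongDual ℝ V)
    (z : Fin (q + 1) → V) (hz : ∀ j, ∀ v : V, (inner ℝ (z j) v : ℝ) = R j v) :
    Real.sqrt (∑ j, ‖R j‖ ^ 2) ≤
      sSup {r : ℝ | ∃ v : ℝ → V,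
        (∃ c : Fin (q + 1) → V, ∀ t : ℝ, v t = ∑ i : Fin (q + 1), t ^ (i : ℕ) • c i) ∧
        (∫ t in a..b, ‖v t‖ ^ 2) ≠ 0 ∧
        r = (∑ j, ∫ t in a..b, (R j (v t)) * φ j t) /
              Real.sqrt (∫ t in a..b, ‖v t‖ ^ 2)} :=
  stmt_17_general q a b hab φ hφpoly horth R z hz
end
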